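/- arXiv:1509.08581 — 3 statements merged into one kernel-verified Lean document; each statement's English description precedes it below -/
import Mathlib

section
/- Let Ω be a sign-free symmetric closed convex set in ℝ^n, s ∈ {1,...,n-1}, and a ∈ ℝ^n. Suppose y is a projection of a onto C_s ∩ Ω with ‖y‖₀ < s. Then the projection of a onto C_s ∩ Ω is the singleton {y}. -/
open scoped RealInnerProductSpace

noncomputable section

/-- Euclidean space ℝ^n. -/
abbrev E (n : ℕ) := EuclideanSpace ℝ (Fin n)

/-- Support of a vector, as a finset. -/
def spt {n : ℕ} (x : E n) : Finset (Fin n) := Finset.univ.filter (fun i => x i ≠ 0)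

/-- A set is symmetric if it is invariant under coordinate permutations. -/
def IsSymmSet {n : ℕ} (X : Set (E n)) : Prop :=
  ∀ x ∈ X, ∀ σ : Equiv.Perm (Fin n), (WithLp.toLp 2 (fun i => x (σ i)) : E n) ∈ X

/-- A set is sign-free symmetric if it is symmetric and invariant under sign flips. -/
def IsSignFreeSymmSet {n : ℕ} (X : Set (E n)) : Prop :=
  IsSymmSet X ∧ ∀ x ∈ X, ∀ ε : Fin n → ℝ, (∀ i, ε i = 1 ∨ ε i = -1) →
    (WithLp.toLp 2 (fun i => ε i * x i) : E n) ∈ X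

/-- A set is nonnegative symmetric if it is symmetric and contained in ℝ^n_+. -/
def IsNonnegSymmSet {n : ℕ} (X : Set (E n)) : Prop :=
  IsSymmSet X ∧ ∀ x ∈ X, ∀ i, 0 ≤ x i

/-- `y` is a (Euclidean) projection of `x` onto `X`. -/
def IsProj {n : ℕ} (X : Set (E n)) (x y : E n) : Prop :=
  y ∈ X ∧ ∀ z ∈ X, ‖y - x‖ ≤ ‖z - x‖

/-- The set of s-sparse vectors. -/
def Cs (n s : ℕ) : Set (E n) := {x | (spt x).card ≤ s}

private lemma mem_spt {n : ℕ} (x : E n) (i : Fin n) : i ∈ spt x ↔ x i ≠ 0 := by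
  simp [spt]

private lemma norm_sub_sq_eq {n : ℕ} (p q : E n) : ‖p - q‖ ^ 2 = ∑ i, (p i - q i) ^ 2 := by
  rw [EuclideanSpace.norm_eq, Real.sq_sqrt (by positivity)]
  exact Finset.sum_congr rfl fun i _ => by
    simp [Real.norm_eq_abs, sq_abs]

private lemma sum_sq_cmp {n : ℕ} (u v : Fin n → ℝ) (t j : Fin n) (htj : t ≠ j)
    (h : ∀ i, i ≠ t → i ≠ j → u i = v i) :
    (∑ i, (u i) ^ 2) - (∑ i, (v i) ^ 2)
      = ((u t) ^ 2 - (v t) ^ 2) + ((u j) ^ 2 - (v j) ^ 2) := by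
  rw [← Finset.sum_sub_distrib]
  have h1 : ∑ i ∈ ({t, j} : Finset (Fin n)), ((u i) ^ 2 - (v i) ^ 2)
      = ∑ i, ((u i) ^ 2 - (v i) ^ 2) :=
    Finset.sum_subset (Finset.subset_univ _) (fun i _ hi => by
      simp only [Finset.mem_insert, Finset.mem_singleton, not_or] at hi
      rw [h i hi.1 hi.2]; ring)
  rw [← h1, Finset.sum_pair htj]

private lemma sign_choice (c : ℝ) : ∃ ε : ℝ, (ε = 1 ∨ ε = -1) ∧ ε * c = |c| := by
  rcases le_or_gt 0 c with h | h
  · exact ⟨1, Or.inl rfl, by rw [one_mul, abs_of_nonneg h]⟩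
  · exact ⟨-1, Or.inr rfl, by rw [abs_of_neg h]; ring⟩

theorem stmt6 {n s : ℕ} (Ω : Set (E n)) (hcl : IsClosed Ω) (hsf : IsSignFreeSymmSet Ω)
    (hconv : Convex ℝ Ω) (hs1 : 1 ≤ s) (hs2 : s < n)
    (a y : E n) (hy : IsProj (Cs n s ∩ Ω) a y) (hcard : (spt y).card < s) :
    ∀ z : E n, IsProj (Cs n s ∩ Ω) a z → z = y := by
  intro z hz
  by_contra hne
  have hyΩ : y ∈ Ω := hy.1.2
  have hzΩ : z ∈ Ω := hz.1.2
  have hzC : (spt z).card ≤ s := hz.1.1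
  have hd : ‖y - a‖ = ‖z - a‖ := le_antisymm (hy.2 z hz.1) (hz.2 y hy.1)
  by_cases hcase : (spt y ∪ spt z).card ≤ s
  · -- Case 1: midpoint is feasible and strictly better
    set w : E n := (2⁻¹ : ℝ) • y + (2⁻¹ : ℝ) • z with hwdef
    have hwcoord : ∀ i, w i = 2⁻¹ * y i + 2⁻¹ * z i := fun i => by
      rw [hwdef]; simp [PiLp.add_apply, PiLp.smul_apply, smul_eq_mul]
    have hwΩ : w ∈ Ω := hconv hyΩ hzΩ (by norm_num) (by norm_num) (by norm_num)
    have hsub : spt w ⊆ spt y ∪ spt z := by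
      intro i hi
      rw [mem_spt] at hi
      rw [Finset.mem_union, mem_spt, mem_spt]
      by_contra hc
      push_neg at hc
      exact hi (by rw [hwcoord i, hc.1, hc.2]; ring)
    have hwC : w ∈ Cs n s := le_trans (Finset.card_le_card hsub) hcase
    have hle : ‖y - a‖ ≤ ‖w - a‖ := hy.2 w ⟨hwC, hwΩ⟩
    have hle2 : ‖y - a‖ ^ 2 ≤ ‖w - a‖ ^ 2 := pow_le_pow_left₀ (norm_nonneg _) hle 2
    rw [norm_sub_sq_eq, norm_sub_sq_eq] at hle2
    have hdsq : ∑ i, (z i - a i) ^ 2 = ∑ i, (y i - a i) ^ 2 := by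
      have h' : ‖z - a‖ ^ 2 = ‖y - a‖ ^ 2 := by rw [hd]
      rwa [norm_sub_sq_eq, norm_sub_sq_eq] at h'
    have hwsum : ∑ i, (w i - a i) ^ 2
        = (∑ i, (y i - a i) ^ 2) / 2 + (∑ i, (z i - a i) ^ 2) / 2
          - (∑ i, (y i - z i) ^ 2) / 4 := by
      rw [Finset.sum_div, Finset.sum_div, Finset.sum_div, ← Finset.sum_add_distrib,
        ← Finset.sum_sub_distrib]
      exact Finset.sum_congr rfl fun i _ => by rw [hwcoord i]; ring
    have hpos : 0 < ∑ i, (y i - z i) ^ 2 := by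
      have hyz : y - z ≠ 0 := sub_ne_zero.mpr fun h => hne h.symm
      have h1 : 0 < ‖y - z‖ := norm_pos_iff.mpr hyz
      have h2 : 0 < ‖y - z‖ ^ 2 := pow_pos h1 2
      rwa [norm_sub_sq_eq] at h2
    rw [hwsum, hdsq] at hle2
    linarith
  · -- Case 2
    push_neg at hcase
    -- find t ∈ spt z \ spt y
    have hT : ∃ t, z t ≠ 0 ∧ y t = 0 := by
      by_contra h
      push_neg at h
      have hsub : spt z ⊆ spt y := fun i hi => by
        rw [mem_spt] at hi ⊢; exact h i hi
      rw [Finset.union_eq_left.mpr hsub] at hcase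
      exact lt_asymm hcase hcard
    have hJ : ∃ j, y j ≠ 0 ∧ z j = 0 := by
      by_contra h
      push_neg at h
      have hsub : spt y ⊆ spt z := fun i hi => by
        rw [mem_spt] at hi ⊢; exact h i hi
      rw [Finset.union_eq_right.mpr hsub] at hcase
      exact absurd hcase (not_lt.mpr hzC)
    obtain ⟨t, hzt, hyt⟩ := hT
    obtain ⟨j, hyj, hzj⟩ := hJ
    have htj : t ≠ j := fun h => hyj (h ▸ hyt)
    -- membership helper: relocate one coordinate with a sign flip
    have hmem : ∀ (x : E n), x ∈ Ω → ∀ (p r : Fin n) (ε₀ : ℝ), (ε₀ = 1 ∨ ε₀ = -1) →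
        (WithLp.toLp 2 (fun i => (if i = r then ε₀ else 1) * x (Equiv.swap p r i)) : E n) ∈ Ω := by
      intro x hx p r ε₀ hε₀
      have h1 : (WithLp.toLp 2 (fun i => x (Equiv.swap p r i)) : E n) ∈ Ω := hsf.1 x hx (Equiv.swap p r)
      have h2 := hsf.2 _ h1 (fun i => if i = r then ε₀ else 1)
        (fun i => by
          by_cases h : i = r
          · simpa [h] using hε₀
          · simp [h])
      exact h2
    -- Step N: from optimality of z, |a j| ≤ |a t|
    obtain ⟨ε₁, hε₁v, hε₁⟩ := sign_choice (z t * a j)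
    have hε₁sq : ε₁ ^ 2 = 1 := by rcases hε₁v with h | h <;> rw [h] <;> norm_num
    set q1 : E n := WithLp.toLp 2 (fun i => (if i = j then ε₁ else 1) * z (Equiv.swap t j i)) with hq1def
    have hq1val : ∀ i, q1 i = (if i = j then ε₁ else 1) * z (Equiv.swap t j i) :=
      fun i => by rw [hq1def]
    have hq1Ω : q1 ∈ Ω := by rw [hq1def]; exact hmem z hzΩ t j ε₁ hε₁v
    have hq1C : q1 ∈ Cs n s := by
      have hcardle : (spt q1).card ≤ (spt z).card := by
        apply Finset.card_le_card_of_injOn (fun i => Equiv.swap t j i)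
        · intro i hi
          simp only [Finset.mem_coe] at hi ⊢
          rw [mem_spt] at hi ⊢
          rw [hq1val i] at hi
          exact right_ne_zero_of_mul hi
        · exact (Equiv.injective _).injOn
      exact le_trans hcardle hzC
    have hq1t : q1 t = 0 := by
      rw [hq1val t, if_neg htj, Equiv.swap_apply_left, hzj, mul_zero]
    have hq1j : q1 j = ε₁ * z t := by
      rw [hq1val j, if_pos rfl, Equiv.swap_apply_right]
    have hq1o : ∀ i, i ≠ t → i ≠ j → q1 i = z i := fun i hit hij => by
      rw [hq1val i, if_neg hij, Equiv.swap_apply_of_ne_of_ne hit hij, one_mul]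
    have hled : ‖z - a‖ ≤ ‖q1 - a‖ := hz.2 q1 ⟨hq1C, hq1Ω⟩
    have hled2 : ‖z - a‖ ^ 2 ≤ ‖q1 - a‖ ^ 2 := pow_le_pow_left₀ (norm_nonneg _) hled 2
    rw [norm_sub_sq_eq, norm_sub_sq_eq] at hled2
    have hdiff : (∑ i, (q1 i - a i) ^ 2) - (∑ i, (z i - a i) ^ 2)
        = ((q1 t - a t) ^ 2 - (z t - a t) ^ 2) + ((q1 j - a j) ^ 2 - (z j - a j) ^ 2) :=
      sum_sq_cmp (fun i => q1 i - a i) (fun i => z i - a i) t j htj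
        (fun i h1 h2 => by show q1 i - a i = z i - a i; rw [hq1o i h1 h2])
    rw [hq1t, hq1j, hzj] at hdiff
    have h0 : 0 ≤ ((0 - a t) ^ 2 - (z t - a t) ^ 2) + ((ε₁ * z t - a j) ^ 2 - (0 - a j) ^ 2) := by
      rw [← hdiff]; linarith
    have e2 : (ε₁ * z t - a j) ^ 2 = (z t) ^ 2 - 2 * |z t * a j| + (a j) ^ 2 := by
      have h' : (ε₁ * z t - a j) ^ 2
          = ε₁ ^ 2 * (z t) ^ 2 - 2 * (ε₁ * (z t * a j)) + (a j) ^ 2 := by ring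
      rw [h', hε₁sq, hε₁]; ring
    rw [e2] at h0
    have hid1 : (0 - a t) ^ 2 - (z t - a t) ^ 2 + (z t) ^ 2 = 2 * (a t * z t) := by ring
    have hid2 : (0 - a j) ^ 2 = (a j) ^ 2 := by ring
    have hN : |z t * a j| ≤ a t * z t := by linarith [h0, hid1, hid2]
    have hzt' : 0 < |z t| := abs_pos.mpr hzt
    have haj : |a j| ≤ |a t| := by
      have h1 : a t * z t ≤ |a t| * |z t| := by
        calc a t * z t ≤ |a t * z t| := le_abs_self _
          _ = |a t| * |z t| := abs_mul _ _
      have h3 : |z t * a j| = |z t| * |a j| := abs_mul _ _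
      have h4 : |a t| * |z t| = |z t| * |a t| := mul_comm _ _
      have h2 : |z t| * |a j| ≤ |z t| * |a t| := by linarith [hN, h1, h3, h4]
      exact le_of_mul_le_mul_left h2 hzt'
    -- Step P: from optimality of y, |y j * a t| + (y j)^2/2 ≤ a j * y j
    obtain ⟨ε₂, hε₂v, hε₂⟩ := sign_choice (y j * a t)
    have hε₂sq : ε₂ ^ 2 = 1 := by rcases hε₂v with h | h <;> rw [h] <;> norm_num
    set q2 : E n := WithLp.toLp 2 (fun i => (if i = t then ε₂ else 1) * y (Equiv.swap j t i)) with hq2def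
    have hq2val : ∀ i, q2 i = (if i = t then ε₂ else 1) * y (Equiv.swap j t i) :=
      fun i => by rw [hq2def]
    have hq2Ω : q2 ∈ Ω := by rw [hq2def]; exact hmem y hyΩ j t ε₂ hε₂v
    have hq2t : q2 t = ε₂ * y j := by
      rw [hq2val t, if_pos rfl, Equiv.swap_apply_right]
    have hq2j : q2 j = 0 := by
      rw [hq2val j, if_neg (Ne.symm htj), Equiv.swap_apply_left, hyt, mul_zero]
    have hq2o : ∀ i, i ≠ t → i ≠ j → q2 i = y i := fun i hit hij => by
      rw [hq2val i, if_neg hit, Equiv.swap_apply_of_ne_of_ne hij hit, one_mul]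
    set w : E n := (2⁻¹ : ℝ) • y + (2⁻¹ : ℝ) • q2 with hwdef
    have hwcoord : ∀ i, w i = 2⁻¹ * y i + 2⁻¹ * q2 i := fun i => by
      rw [hwdef]; simp [PiLp.add_apply, PiLp.smul_apply, smul_eq_mul]
    have hwt : w t = 2⁻¹ * (ε₂ * y j) := by rw [hwcoord t, hq2t, hyt]; ring
    have hwj : w j = 2⁻¹ * y j := by rw [hwcoord j, hq2j]; ring
    have hwo : ∀ i, i ≠ t → i ≠ j → w i = y i := fun i hit hij => by
      rw [hwcoord i, hq2o i hit hij]; ring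
    have hwΩ : w ∈ Ω := hconv hyΩ hq2Ω (by norm_num) (by norm_num) (by norm_num)
    have hwC : w ∈ Cs n s := by
      have hsub : spt w ⊆ insert t (spt y) := by
        intro i hi
        rw [mem_spt] at hi
        by_contra hns
        rw [Finset.mem_insert] at hns
        push_neg at hns
        obtain ⟨hit, hiy⟩ := hns
        rw [mem_spt] at hiy
        push_neg at hiy
        have hij : i ≠ j := fun h => hyj (h ▸ hiy)
        exact hi (by rw [hwo i hit hij, hiy])
      calc (spt w).card ≤ (insert t (spt y)).card := Finset.card_le_card hsub
        _ ≤ (spt y).card + 1 := Finset.card_insert_le _ _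
        _ ≤ s := Nat.succ_le_of_lt hcard
    have hled' : ‖y - a‖ ≤ ‖w - a‖ := hy.2 w ⟨hwC, hwΩ⟩
    have hled2' : ‖y - a‖ ^ 2 ≤ ‖w - a‖ ^ 2 := pow_le_pow_left₀ (norm_nonneg _) hled' 2
    rw [norm_sub_sq_eq, norm_sub_sq_eq] at hled2'
    have hdiff' : (∑ i, (w i - a i) ^ 2) - (∑ i, (y i - a i) ^ 2)
        = ((w t - a t) ^ 2 - (y t - a t) ^ 2) + ((w j - a j) ^ 2 - (y j - a j) ^ 2) :=
      sum_sq_cmp (fun i => w i - a i) (fun i => y i - a i) t j htj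
        (fun i h1 h2 => by show w i - a i = y i - a i; rw [hwo i h1 h2])
    rw [hwt, hwj, hyt] at hdiff'
    have h0' : 0 ≤ ((2⁻¹ * (ε₂ * y j) - a t) ^ 2 - (0 - a t) ^ 2)
        + ((2⁻¹ * y j - a j) ^ 2 - (y j - a j) ^ 2) := by
      rw [← hdiff']; linarith
    have e3 : (2⁻¹ * (ε₂ * y j) - a t) ^ 2
        = 4⁻¹ * (y j) ^ 2 - |y j * a t| + (a t) ^ 2 := by
      have h' : (2⁻¹ * (ε₂ * y j) - a t) ^ 2
          = 4⁻¹ * (ε₂ ^ 2 * (y j) ^ 2) - (ε₂ * (y j * a t)) + (a t) ^ 2 := by ring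
      rw [h', hε₂sq, hε₂]; ring
    rw [e3] at h0'
    have hid3 : (2⁻¹ * y j - a j) ^ 2 - (y j - a j) ^ 2 = -(3/4) * (y j) ^ 2 + a j * y j := by
      ring
    have hid4 : (0 - a t) ^ 2 = (a t) ^ 2 := by ring
    have hP : |y j * a t| + (y j) ^ 2 / 2 ≤ a j * y j := by linarith [h0', hid3, hid4]
    -- final contradiction
    have c1 : a j * y j ≤ |a j| * |y j| := by
      calc a j * y j ≤ |a j * y j| := le_abs_self _
        _ = |a j| * |y j| := abs_mul _ _
    have c2 : |a j| * |y j| ≤ |a t| * |y j| := mul_le_mul_of_nonneg_right haj (abs_nonneg _)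
    have c3 : |y j * a t| = |a t| * |y j| := by rw [abs_mul, mul_comm]
    have hy2 : 0 < (y j) ^ 2 := by positivity
    linarith
end
end

section
/- Let f : ℝ^n → ℝ be differentiable with L_f-Lipschitz gradient, S ⊆ ℝ^n closed, t ∈ (0, 1/L_f), and x ∈ S. If w is any minimizer of ‖z - (x - t∇f(x))‖² over z ∈ S, then f(w) ≤ f(x) - (1/2)(1/t - L_f)‖w - x‖². -/
open scoped RealInnerProductSpace

noncomputable section

/-- Descent lemma: Lipschitz gradient implies quadratic upper bound. -/
lemma descent_lemma {n : ℕ} (f : E n → ℝ) (g : E n → E n) (L : ℝ) (hL : 0 < L)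
    (hgrad : ∀ x, HasGradientAt f (g x) x)
    (hlip : ∀ x y : E n, ‖g x - g y‖ ≤ L * ‖x - y‖)
    (x w : E n) :
    f w ≤ f x + ⟪g x, w - x⟫ + L / 2 * ‖w - x‖ ^ 2 := by
  set d := w - x with hd
  set φ : ℝ → ℝ := fun s => f (x + s • d) with hφdef
  have hline : ∀ s : ℝ, HasDerivAt (fun s : ℝ => x + s • d) d s := by
    intro s
    simpa using ((hasDerivAt_id s).smul_const d).const_add x
  have hφ : ∀ s : ℝ, HasDerivAt φ ⟪g (x + s • d), d⟫ s := by
    intro s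
    have h1 := (hgrad (x + s • d)).hasFDerivAt.comp_hasDerivAt s (hline s)
    simp at h1
    exact h1
  set ψ : ℝ → ℝ := fun s => φ s - φ 0 - s * ⟪g x, d⟫ - L * s ^ 2 / 2 * ‖d‖ ^ 2
    with hψdef
  have hψ : ∀ s : ℝ, HasDerivAt ψ
      (⟪g (x + s • d), d⟫ - ⟪g x, d⟫ - L * s * ‖d‖ ^ 2) s := by
    intro s
    have h1 : HasDerivAt (fun s : ℝ => s * ⟪g x, d⟫) ⟪g x, d⟫ s := by
      simpa using (hasDerivAt_id s).mul_const ⟪g x, d⟫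
    have h2 : HasDerivAt (fun s : ℝ => L * s ^ 2 / 2 * ‖d‖ ^ 2)
        (L * s * ‖d‖ ^ 2) s := by
      have := ((hasDerivAt_pow 2 s).const_mul L).div_const 2
      have h3 := this.mul_const (‖d‖ ^ 2)
      refine h3.congr_deriv ?_
      push_cast
      ring
    have h5 := (((hφ s).sub_const (φ 0)).sub h1).sub h2
    exact h5
  have hanti : AntitoneOn ψ (Set.Icc (0:ℝ) 1) := by
    apply antitoneOn_of_deriv_nonpos (convex_Icc 0 1)
    · exact fun s _ => (hψ s).continuousAt.continuousWithinAt
    · intro s _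
      exact (hψ s).differentiableAt.differentiableWithinAt
    · intro s hs
      rw [interior_Icc] at hs
      rw [(hψ s).deriv]
      have hcs : ⟪g (x + s • d) - g x, d⟫ ≤ ‖g (x + s • d) - g x‖ * ‖d‖ :=
        real_inner_le_norm _ _
      have hl : ‖g (x + s • d) - g x‖ ≤ L * (s * ‖d‖) := by
        have := hlip (x + s • d) x
        simpa [norm_smul, abs_of_pos hs.1, mul_assoc] using this
      have hd0 : (0:ℝ) ≤ ‖d‖ := norm_nonneg _
      have : ⟪g (x + s • d), d⟫ - ⟪g x, d⟫ ≤ L * s * ‖d‖ ^ 2 := by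
        have h4 : ⟪g (x + s • d), d⟫ - ⟪g x, d⟫ = ⟪g (x + s • d) - g x, d⟫ := by
          rw [inner_sub_left]
        rw [h4]
        calc ⟪g (x + s • d) - g x, d⟫ ≤ ‖g (x + s • d) - g x‖ * ‖d‖ := hcs
          _ ≤ L * (s * ‖d‖) * ‖d‖ := by
              exact mul_le_mul_of_nonneg_right hl hd0
          _ = L * s * ‖d‖ ^ 2 := by ring
      linarith
  have key : ψ 1 ≤ ψ 0 :=
    hanti (by norm_num) (by norm_num) (by norm_num)
  have h0 : ψ 0 = 0 := by simp [hψdef]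
  have h1 : φ 1 = f w := by simp [hφdef, hd]
  rw [h0, hψdef] at key
  simp only [one_pow, one_mul, mul_one] at key
  have hφ0 : φ 0 = f x := by simp [hφdef]
  rw [h1, hφ0] at key
  linarith

theorem stmt9 {n : ℕ} (f : E n → ℝ) (g : E n → E n) (L : ℝ) (hL : 0 < L)
    (hgrad : ∀ x, HasGradientAt f (g x) x)
    (hlip : ∀ x y : E n, ‖g x - g y‖ ≤ L * ‖x - y‖)
    (S : Set (E n)) (hS : IsClosed S)
    (t : ℝ) (ht : 0 < t) (ht' : t < 1 / L)
    (x : E n) (hx : x ∈ S)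
    (w : E n) (hw : w ∈ S)
    (hwmin : ∀ z ∈ S, ‖w - (x - t • g x)‖ ≤ ‖z - (x - t • g x)‖) :
    f w ≤ f x - (1 / 2) * (1 / t - L) * ‖w - x‖ ^ 2 := by
  have hdesc := descent_lemma f g L hL hgrad hlip x w
  have hproj := hwmin x hx
  have he : w - (x - t • g x) = (w - x) + t • g x := by abel
  have hx0 : x - (x - t • g x) = t • g x := by abel
  rw [he, hx0] at hproj
  have hsq : ‖(w - x) + t • g x‖ ^ 2 ≤ ‖t • g x‖ ^ 2 := by
    exact pow_le_pow_left₀ (norm_nonneg _) hproj 2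
  rw [norm_add_sq_real] at hsq
  have hin : ⟪w - x, t • g x⟫ = t * ⟪g x, w - x⟫ := by
    rw [real_inner_smul_right, real_inner_comm]
  rw [hin] at hsq
  have h2t : 2 * (t * ⟪g x, w - x⟫) ≤ -‖w - x‖ ^ 2 := by linarith
  have htinv : t * (1 / t) = 1 := by field_simp
  have hpos : (0:ℝ) < 1 / t := by positivity
  nlinarith [mul_le_mul_of_nonneg_left h2t hpos.le]
end
end

section
/- Let Ω ⊆ ℝ^n be closed convex, f : ℝ^n → ℝ differentiable, s ∈ {1,...,n-1}, and C_s = {x : ‖x‖₀ ≤ s}. Suppose x* ∈ C_s ∩ Ω with ‖x*‖₀ < s, and for some t̂ > 0, x* is a minimizer of ‖x - (x* - t̂∇f(x*))‖² over C_s ∩ Ω. Assume additionally that whenever v_T ∈ N_{Ω_T}(x*_T) for all T ⊇ supp(x*) with |T| = s, one has v ∈ N_Ω(x*). Then -∇f(x*) ∈ N_Ω(x*), and consequently x* = proj_Ω(x* - t∇f(x*)) for all t ≥ 0. -/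
open scoped RealInnerProductSpace

noncomputable section

/-! The minimality of `x*` over `C_s ∩ Ω` is only ever tested along segments `[x*, y]` with
`y ∈ Ω` supported on an `s`-super support `T` of `x*`: such a segment stays in `C_s ∩ Ω`, so the
variational inequality of the projection onto the convex set `[x*, y]` gives
`⟪-∇f(x*), y - x*⟫ ≤ 0`. The hypothesis on normal cones upgrades this to all `y ∈ Ω`, and the
variational inequality for `Ω` itself then shows that `x*` is the projection of every point
`x* - t ∇f(x*)`, `t ≥ 0`. -/

theorem forall_norm_sub_le_iff_real_inner_le_zero {F : Type*} [NormedAddCommGroup F]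
    [InnerProductSpace ℝ F] {K : Set F} (hK : Convex ℝ K) {u v : F} (hv : v ∈ K) :
    (∀ w ∈ K, ‖v - u‖ ≤ ‖w - u‖) ↔ ∀ w ∈ K, ⟪u - v, w - v⟫ ≤ 0 := by
  have : Nonempty K := ⟨⟨v, hv⟩⟩
  have hbdd : BddBelow (Set.range fun w : K => ‖u - w‖) :=
    ⟨0, fun _ ⟨_, h⟩ => h ▸ norm_nonneg _⟩
  rw [← norm_eq_iInf_iff_real_inner_le_zero hK hv]
  simp only [norm_sub_rev _ u]
  constructor
  · exact fun h => le_antisymm (le_ciInf fun w => h w w.2) (ciInf_le hbdd ⟨v, hv⟩)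
  · exact fun h w hw => h ▸ ciInf_le hbdd ⟨w, hw⟩

theorem spt_subset_iff {n : ℕ} {x : E n} {T : Finset (Fin n)} :
    spt x ⊆ T ↔ ∀ i ∉ T, x i = 0 := by
  simp only [spt, Finset.subset_iff, Finset.mem_filter, Finset.mem_univ, true_and]
  exact forall_congr' fun i => not_imp_comm

theorem convex_setOf_spt_subset {n : ℕ} (T : Finset (Fin n)) :
    Convex ℝ {x : E n | spt x ⊆ T} := by
  intro x hx y hy a b _ _ _
  refine spt_subset_iff.2 fun i hi => ?_
  simp [spt_subset_iff.1 hx i hi, spt_subset_iff.1 hy i hi]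

theorem segment_subset_Cs_inter {n s : ℕ} {Ω : Set (E n)} (hconv : Convex ℝ Ω)
    {T : Finset (Fin n)} (hT : T.card = s) {x y : E n} (hx : x ∈ Ω) (hy : y ∈ Ω)
    (hxT : spt x ⊆ T) (hyT : ∀ i ∉ T, y i = 0) :
    segment ℝ x y ⊆ Cs n s ∩ Ω := by
  have hseg : segment ℝ x y ⊆ {z : E n | spt z ⊆ T} ∩ Ω :=
    ((convex_setOf_spt_subset T).inter hconv).segment_subset ⟨hxT, hx⟩
      ⟨spt_subset_iff.2 hyT, hy⟩
  exact fun z hz => ⟨hT ▸ Finset.card_le_card (hseg hz).1, (hseg hz).2⟩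

theorem stmt14_general {n s : ℕ} (Ω : Set (E n)) (hconv : Convex ℝ Ω) (g : E n → E n)
    (xs : E n) (hxs : xs ∈ Cs n s ∩ Ω) (th : ℝ) (hth : 0 < th)
    (hmin : ∀ z ∈ Cs n s ∩ Ω,
      ‖xs - (xs - th • g xs)‖ ≤ ‖z - (xs - th • g xs)‖)
    (hnc : ∀ v : E n,
      (∀ T : Finset (Fin n), spt xs ⊆ T → T.card = s →
        ∀ y ∈ Ω, (∀ i ∉ T, y i = 0) → ⟪v, y - xs⟫ ≤ 0) →
      ∀ y ∈ Ω, ⟪v, y - xs⟫ ≤ 0) :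
    (∀ y ∈ Ω, ⟪-(g xs), y - xs⟫ ≤ 0) ∧
    (∀ t : ℝ, 0 ≤ t → ∀ y ∈ Ω,
      ‖xs - (xs - t • g xs)‖ ≤ ‖y - (xs - t • g xs)‖) := by
  have hnormal : ∀ y ∈ Ω, ⟪-(g xs), y - xs⟫ ≤ 0 := by
    refine hnc _ fun T hxsT hT y hy hyT => ?_
    have hseg := segment_subset_Cs_inter hconv hT hxs.2 hy hxsT hyT
    have hvi := (forall_norm_sub_le_iff_real_inner_le_zero (convex_segment xs y)
      (left_mem_segment ℝ xs y)).1 (fun z hz => hmin z (hseg hz)) y (right_mem_segment ℝ xs y)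
    rw [sub_sub_cancel_left, ← smul_neg, real_inner_smul_left] at hvi
    exact nonpos_of_mul_nonpos_right hvi hth
  refine ⟨hnormal, fun t ht => (forall_norm_sub_le_iff_real_inner_le_zero hconv hxs.2).2 ?_⟩
  intro y hy
  rw [sub_sub_cancel_left, ← smul_neg, real_inner_smul_left]
  exact mul_nonpos_of_nonneg_of_nonpos ht (hnormal y hy)

theorem stmt14 {n s : ℕ} (Ω : Set (E n)) (hcl : IsClosed Ω) (hconv : Convex ℝ Ω)
    (f : E n → ℝ) (g : E n → E n) (hgrad : ∀ x, HasGradientAt f (g x) x)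
    (hs1 : 1 ≤ s) (hs2 : s < n)
    (xs : E n) (hxs : xs ∈ Cs n s ∩ Ω) (hcard : (spt xs).card < s)
    (th : ℝ) (hth : 0 < th)
    (hmin : ∀ z ∈ Cs n s ∩ Ω,
      ‖xs - (xs - th • g xs)‖ ≤ ‖z - (xs - th • g xs)‖)
    (hnc : ∀ v : E n,
      (∀ T : Finset (Fin n), spt xs ⊆ T → T.card = s →
        ∀ y ∈ Ω, (∀ i ∉ T, y i = 0) → ⟪v, y - xs⟫ ≤ 0) →
      ∀ y ∈ Ω, ⟪v, y - xs⟫ ≤ 0) :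
    (∀ y ∈ Ω, ⟪-(g xs), y - xs⟫ ≤ 0) ∧
    (∀ t : ℝ, 0 ≤ t → ∀ y ∈ Ω,
      ‖xs - (xs - t • g xs)‖ ≤ ‖y - (xs - t • g xs)‖) :=
  stmt14_general Ω hconv g xs hxs th hth hmin hnc
end
end
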